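/- arXiv:1905.00731 — 5 statements merged into one kernel-verified Lean document; each statement's English description precedes it below -/
import Mathlib

section
/- For all z1, z2 ≥ 0, the ratio (z1² + 4z1z2 + 3z1 + 4z2² + 6z2 + 2)/(z1² + 4z1z2 + 2z1 + 5z2² + 6z2 + 2) is at least 4/5. -/
theorem stmt_0 (z1 z2 : ℝ) (hz1 : 0 ≤ z1) (hz2 : 0 ≤ z2) :
    (4 : ℝ) / 5 ≤
      (z1^2 + 4*z1*z2 + 3*z1 + 4*z2^2 + 6*z2 + 2) /
      (z1^2 + 4*z1*z2 + 2*z1 + 5*z2^2 + 6*z2 + 2) := by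
  have hden : 0 < z1^2 + 4*z1*z2 + 2*z1 + 5*z2^2 + 6*z2 + 2 := by positivity
  -- The `z2^2` terms cancel, so the excess of the numerator over 4/5 of the denominator
  -- has only nonnegative coefficients.
  have excess :
      5 * (z1^2 + 4*z1*z2 + 3*z1 + 4*z2^2 + 6*z2 + 2)
        - 4 * (z1^2 + 4*z1*z2 + 2*z1 + 5*z2^2 + 6*z2 + 2)
        = z1^2 + 4*z1*z2 + 7*z1 + 6*z2 + 2 := by ring
  have hexcess : 0 ≤ z1^2 + 4*z1*z2 + 7*z1 + 6*z2 + 2 := by positivity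
  rw [le_div_iff₀ hden]
  linarith
end

section
/- For all z1, z2 ≥ 0 with z1 ≤ z2², the partial derivative of R(z1,z2) = (z1²+4z1z2+3z1+4z2²+6z2+2)/(z1²+4z1z2+2z1+5z2²+6z2+2) with respect to z1 is nonnegative. -/
/-!
Write `N` and `D` for the numerator and denominator. Then `N' = D' + 1` and `D - N = z2² - z1`,
so the numerator of the quotient rule is
`N' D - N D' = D + D' (D - N) = z1 (2 z2² - z1) + 4 z2³ + 7 z2² + 6 z2 + 2`,
which is nonnegative once `0 ≤ z1 ≤ z2²` and `0 ≤ z2`.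
-/

lemma hasDerivAt_monic_quadratic (b c z : ℝ) :
    HasDerivAt (fun x : ℝ => x^2 + b*x + c) (2*z + b) z := by
  simpa using ((hasDerivAt_pow 2 z).add ((hasDerivAt_id z).const_mul b)).add_const c

lemma hasDerivAt_ratio {y : ℝ} (z : ℝ) (hy : 0 ≤ y) :
    HasDerivAt (fun z : ℝ =>
      (z^2 + 4*z*y + 3*z + 4*y^2 + 6*y + 2) / (z^2 + 4*z*y + 2*z + 5*y^2 + 6*y + 2))
      ((-z^2 + 2*z*y^2 + 4*y^3 + 7*y^2 + 6*y + 2) /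
        (z^2 + 4*z*y + 2*z + 5*y^2 + 6*y + 2)^2) z := by
  -- the denominator is `(z + 2y + 1)² + (y + 1)²`
  have hD : z^2 + (4*y + 2)*z + (5*y^2 + 6*y + 2) ≠ 0 := by
    nlinarith [sq_nonneg (z + 2*y + 1)]
  have hf : (fun z : ℝ =>
      (z^2 + 4*z*y + 3*z + 4*y^2 + 6*y + 2) / (z^2 + 4*z*y + 2*z + 5*y^2 + 6*y + 2)) =
      fun x => (x^2 + (4*y + 3)*x + (4*y^2 + 6*y + 2)) /
        (x^2 + (4*y + 2)*x + (5*y^2 + 6*y + 2)) := by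
    funext x; ring
  rw [hf]
  refine ((hasDerivAt_monic_quadratic _ _ z).div
    (hasDerivAt_monic_quadratic _ _ z) hD).congr_deriv ?_
  congr 1 <;> ring

lemma ratio_deriv_numerator_nonneg {z y : ℝ} (hz : 0 ≤ z) (hy : 0 ≤ y) (h : z ≤ y^2) :
    0 ≤ -z^2 + 2*z*y^2 + 4*y^3 + 7*y^2 + 6*y + 2 := by
  nlinarith [mul_nonneg hz (sub_nonneg.2 h), pow_nonneg hy 3]

theorem stmt_3 (z1 z2 : ℝ) (hz1 : 0 ≤ z1) (hz2 : 0 ≤ z2) (h : z1 ≤ z2^2) :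
    0 ≤ deriv (fun z : ℝ =>
      (z^2 + 4*z*z2 + 3*z + 4*z2^2 + 6*z2 + 2) /
      (z^2 + 4*z*z2 + 2*z + 5*z2^2 + 6*z2 + 2)) z1 := by
  rw [(hasDerivAt_ratio z1 hz2).deriv]
  exact div_nonneg (ratio_deriv_numerator_nonneg hz1 hz2 h) (sq_nonneg _)
end

section
/- If 0 ≤ z2 ≤ (√7 − 1)/3 and z1 ≥ 0, then R(z1,z2) = (z1²+4z1z2+3z1+4z2²+6z2+2)/(z1²+4z1z2+2z1+5z2²+6z2+2) ≥ R(0, (√7−1)/3) > 0.955. -/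
/-! Writing `D a b` for the denominator, `R a b = 1 + (a - b²) / D a b`. Increasing `a` only
helps, since `a * D 0 b + b² * (D a b - D 0 b) ≥ 0`, and `R 0 b = 1 - 1 / (5 + 6 / b + 2 / b²)`
decreases in `b`. At `s = (√7 - 1) / 3`, a root of `3 s² + 2 s - 2`, this gives
`R 0 s = (7 + 5 s) / (8 + 4 s)`, which exceeds `0.955` as soon as `s > 0.5424`. -/

open Real

noncomputable def quadRatio (a b : ℝ) : ℝ :=
  (a^2 + 4*a*b + 3*a + 4*b^2 + 6*b + 2) / (a^2 + 4*a*b + 2*a + 5*b^2 + 6*b + 2)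

lemma quadRatio_den_pos {a b : ℝ} (ha : 0 ≤ a) (hb : 0 ≤ b) :
    0 < a^2 + 4*a*b + 2*a + 5*b^2 + 6*b + 2 := by
  positivity

lemma quadRatio_zero_le {a b : ℝ} (ha : 0 ≤ a) (hb : 0 ≤ b) :
    quadRatio 0 b ≤ quadRatio a b := by
  unfold quadRatio
  rw [div_le_div_iff₀ (quadRatio_den_pos le_rfl hb) (quadRatio_den_pos ha hb)]
  nlinarith [mul_nonneg ha (quadRatio_den_pos le_rfl hb).le,
    mul_nonneg (sq_nonneg b) (quadRatio_den_pos ha hb).le, mul_nonneg ha hb]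

lemma quadRatio_zero_antitoneOn : AntitoneOn (quadRatio 0) (Set.Ici 0) := by
  intro b hb c hc hbc
  unfold quadRatio
  rw [div_le_div_iff₀ (quadRatio_den_pos le_rfl hc) (quadRatio_den_pos le_rfl hb)]
  nlinarith [mul_nonneg (sub_nonneg.2 hbc) (add_nonneg (mul_nonneg hb hc) (add_nonneg hb hc)),
    mul_nonneg (sub_nonneg.2 hbc) (mul_nonneg (Set.mem_Ici.1 hb) (Set.mem_Ici.1 hc))]

lemma quadRatio_zero_of_root {s : ℝ} (hs : 3 * s^2 + 2 * s = 2) (hs0 : 0 ≤ s) :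
    quadRatio 0 s = (7 + 5 * s) / (8 + 4 * s) := by
  unfold quadRatio
  rw [div_eq_div_iff (quadRatio_den_pos le_rfl hs0).ne' (by positivity)]
  linear_combination (-3 * s - 1) * hs

lemma lt_quadRatio_zero_sqrt_seven : (0.955 : ℝ) < quadRatio 0 ((√7 - 1) / 3) := by
  have h7 : √7 ^ 2 = 7 := sq_sqrt (by norm_num)
  have h_lb : (2.64 : ℝ) < √7 := by nlinarith [sqrt_nonneg 7]
  rw [quadRatio_zero_of_root (by linear_combination h7 / 3) (by linarith),
    lt_div_iff₀ (by linarith)]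
  linarith

theorem stmt_5 (z1 z2 : ℝ) (hz1 : 0 ≤ z1) (hz2 : 0 ≤ z2)
    (hz2' : z2 ≤ (Real.sqrt 7 - 1) / 3) :
    let R : ℝ → ℝ → ℝ := fun a b =>
      (a^2 + 4*a*b + 3*a + 4*b^2 + 6*b + 2) /
      (a^2 + 4*a*b + 2*a + 5*b^2 + 6*b + 2)
    R 0 ((Real.sqrt 7 - 1) / 3) ≤ R z1 z2 ∧ (0.955 : ℝ) < R 0 ((Real.sqrt 7 - 1) / 3) := by
  show quadRatio 0 ((√7 - 1) / 3) ≤ quadRatio z1 z2 ∧ 0.955 < quadRatio 0 ((√7 - 1) / 3)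
  refine ⟨?_, lt_quadRatio_zero_sqrt_seven⟩
  calc quadRatio 0 ((√7 - 1) / 3)
      ≤ quadRatio 0 z2 := quadRatio_zero_antitoneOn hz2 (hz2.trans hz2') hz2'
    _ ≤ quadRatio z1 z2 := quadRatio_zero_le hz1 hz2
end

section
/- For all β ≥ 0 and z2 ≥ (√7−1)/3, the function G(β,z2) = (z2²+z2+1−√((1+β)z2²+2(1+β)z2+1))/((3+β)z2²+(2β+4)z2+2z2√((1+β)z2²+2(1+β)z2+1)+2) satisfies G(β,z2) ≤ 0.0433, provided z2 ≤ √(2β). -/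
/-!
Write `s` for the square root and `c = 0.0433`. The numerator minus `c` times the denominator
equals `margin c β z - (1 + 2cz) s`, where `margin` is affine in `β`, so the bound says
`margin ≤ (1 + 2cz) s`; only the case `margin > 0` needs work, and there it follows from
`defect = (1 + 2cz)² s² - margin² ≥ 0`. As a function of `β` the defect is a concave quadratic
whose Taylor expansion shows that it increases on `β ≥ z²/2` as long as the margin
stays positive. It therefore suffices to check `defect ≥ 0` on the boundary `β = z²/2`, a
polynomial inequality of degree 8 in `z` that holds for `0 ≤ z ≤ 6` (its minimum, about `8·10⁻⁴`
near `z ≈ 1.087`, shows that `0.0433` is nearly sharp); for `z > 6` the margin at the boundary is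
already negative.
-/

def radicand (b z : ℝ) : ℝ := (1 + b) * z ^ 2 + 2 * (1 + b) * z + 1

def margin (c b z : ℝ) : ℝ := z ^ 2 + z + 1 - c * ((3 + b) * z ^ 2 + (2 * b + 4) * z + 2)

def defect (c b z : ℝ) : ℝ := (1 + 2 * c * z) ^ 2 * radicand b z - margin c b z ^ 2

lemma margin_eq (c b b₀ z : ℝ) :
    margin c b z = margin c b₀ z - c * (z ^ 2 + 2 * z) * (b - b₀) := by
  unfold margin; ring

lemma margin_anti {c b b₀ z : ℝ} (hc : 0 ≤ c) (hz : 0 ≤ z) (hb : b₀ ≤ b) :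
    margin c b z ≤ margin c b₀ z := by
  rw [margin_eq c b b₀ z, sub_le_self_iff]
  have : 0 ≤ b - b₀ := sub_nonneg.2 hb
  positivity

lemma defect_eq (c b b₀ z : ℝ) :
    defect c b z = defect c b₀ z + (z ^ 2 + 2 * z) * (b - b₀) *
      ((1 + 2 * c * z) ^ 2 + c * margin c b₀ z + c * margin c b z) := by
  unfold defect margin radicand; ring

lemma defect_le_of_margin_pos {c b b₀ z : ℝ} (hc : 0 ≤ c) (hz : 0 ≤ z) (hb : b₀ ≤ b)
    (hm : 0 < margin c b z) : defect c b₀ z ≤ defect c b z := by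
  have hm₀ : 0 < margin c b₀ z := hm.trans_le (margin_anti hc hz hb)
  rw [defect_eq c b b₀ z, le_add_iff_nonneg_right]
  have : 0 ≤ b - b₀ := sub_nonneg.2 hb
  positivity

lemma margin_le_mul_sqrt {c b z : ℝ} (hc : 0 ≤ 1 + 2 * c * z)
    (h : 0 < margin c b z → 0 ≤ defect c b z) :
    margin c b z ≤ (1 + 2 * c * z) * √(radicand b z) := by
  rcases le_or_gt (margin c b z) 0 with hm | hm
  · exact hm.trans (by positivity)
  calc margin c b z ≤ √((1 + 2 * c * z) ^ 2 * radicand b z) := by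
        rw [Real.le_sqrt' hm]
        have := h hm
        unfold defect at this
        linarith
    _ = (1 + 2 * c * z) * √(radicand b z) := by
        rw [Real.sqrt_mul (sq_nonneg _), Real.sqrt_sq hc]

lemma div_le_of_margin_le {c b z : ℝ} (hb : 0 ≤ b) (hz : 0 ≤ z)
    (h : margin c b z ≤ (1 + 2 * c * z) * √(radicand b z)) :
    (z ^ 2 + z + 1 - √(radicand b z)) /
      ((3 + b) * z ^ 2 + (2 * b + 4) * z + 2 * z * √(radicand b z) + 2) ≤ c := by
  have hD : 0 < (3 + b) * z ^ 2 + (2 * b + 4) * z + 2 * z * √(radicand b z) + 2 := by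
    positivity
  rw [div_le_iff₀ hD]
  unfold margin at h
  linarith

lemma le_six_of_margin_pos {z : ℝ} (hz : 0 ≤ z) (h : 0 < margin 0.0433 (z ^ 2 / 2) z) :
    z ≤ 6 := by
  unfold margin at h
  by_contra! h6
  have h6' : 0 ≤ z - 6 := by linarith
  nlinarith [mul_nonneg h6' (sq_nonneg z), mul_nonneg (mul_nonneg h6' hz) hz,
    sq_nonneg (z * (z - 6))]

lemma defect_nonneg_of_le_six {z : ℝ} (hz : 0 ≤ z) (h6 : z ≤ 6) :
    0 ≤ defect 0.0433 (z ^ 2 / 2) z := by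
  unfold defect margin radicand
  have h6' : 0 ≤ 6 - z := sub_nonneg.2 h6
  nlinarith [sq_nonneg (z - 1.087), sq_nonneg (z ^ 2 - 1.182), mul_nonneg hz h6',
    mul_nonneg (mul_nonneg hz h6') (sq_nonneg (z - 1.087)),
    mul_nonneg hz (sq_nonneg (z - 1.087)), mul_nonneg h6' (sq_nonneg (z - 1.087)),
    sq_nonneg ((z - 1.087) * z), sq_nonneg ((z - 1.087) * (6 - z))]

lemma margin_le_mul_sqrt_of_half_sq_le {b z : ℝ} (hz : 0 ≤ z) (hb : z ^ 2 / 2 ≤ b) :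
    margin 0.0433 b z ≤ (1 + 2 * 0.0433 * z) * √(radicand b z) := by
  refine margin_le_mul_sqrt (by positivity) fun hm => ?_
  have hc : (0 : ℝ) ≤ 0.0433 := by norm_num
  have h6 := le_six_of_margin_pos hz (hm.trans_le (margin_anti hc hz hb))
  exact (defect_nonneg_of_le_six hz h6).trans (defect_le_of_margin_pos hc hz hb hm)

theorem stmt_7_general (β z2 : ℝ) (hz2 : (Real.sqrt 7 - 1) / 3 ≤ z2)
    (hub : z2 ≤ Real.sqrt (2*β)) :
    (z2^2 + z2 + 1 - Real.sqrt ((1+β)*z2^2 + 2*(1+β)*z2 + 1)) /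
      ((3+β)*z2^2 + (2*β+4)*z2 + 2*z2*Real.sqrt ((1+β)*z2^2 + 2*(1+β)*z2 + 1) + 2)
      ≤ 0.0433 := by
  have h7 : 1 < √7 := by rw [Real.lt_sqrt zero_le_one]; norm_num
  have hz : 0 < z2 := by linarith
  have hβ : z2 ^ 2 / 2 ≤ β := by linarith [(Real.le_sqrt' hz).1 hub]
  exact div_le_of_margin_le (le_trans (by positivity) hβ) hz.le (margin_le_mul_sqrt_of_half_sq_le hz.le hβ)

theorem stmt_7 (β z2 : ℝ) (hβ : 0 ≤ β) (hz2 : (Real.sqrt 7 - 1) / 3 ≤ z2)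
    (hub : z2 ≤ Real.sqrt (2*β)) :
    (z2^2 + z2 + 1 - Real.sqrt ((1+β)*z2^2 + 2*(1+β)*z2 + 1)) /
      ((3+β)*z2^2 + (2*β+4)*z2 + 2*z2*Real.sqrt ((1+β)*z2^2 + 2*(1+β)*z2 + 1) + 2)
      ≤ 0.0433 :=
  stmt_7_general β z2 hz2 hub
end

section
/- With the notation z_i = Π_{j=i}^C (λ_j/μ) for nondecreasing nonnegative λ_j, a_i = C!/(C−i)!, x = Σ_{k=1}^C a_k z_{k+1}, y = Σ_{k=2}^C a_k z_k, it holds that y·(a_1 z_1 + y) ≥ a_2·z_1·x. -/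
/-!
Since `z_i = (λ_i/μ) z_{i+1}` and `λ_1 ≤ λ_k`, we get the cross inequality `z_1 z_{k+1} ≤ z_2 z_k`
for `2 ≤ k ≤ C`. Summing it against the weights `a_k` gives `z_1 x ≤ a_1 z_1 z_2 + z_2 y`, hence
`a_2 z_1 x ≤ a_2 z_2 (a_1 z_1 + y) ≤ y (a_1 z_1 + y)`, the last step because `a_2 z_2` is a term of `y`.
-/

open Finset

@[to_additive]
lemma prod_Icc_eq_mul_prod_Icc_succ {M : Type*} [CommMonoid M] (f : ℕ → M) {i C : ℕ}
    (h : i ≤ C) : ∏ j ∈ Icc i C, f j = f i * ∏ j ∈ Icc (i + 1) C, f j := by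
  rw [← insert_Icc_succ_left_eq_Icc h, Order.succ_eq_add_one, prod_insert (by simp)]

lemma prod_Icc_one_mul_prod_Icc_succ_le {C k : ℕ} (r : ℕ → ℝ) (hr : ∀ j ∈ Icc 1 C, 0 ≤ r j)
    (hr1 : ∀ j ∈ Icc 1 C, r 1 ≤ r j) (hk : k ∈ Icc 2 C) :
    (∏ j ∈ Icc 1 C, r j) * ∏ j ∈ Icc (k + 1) C, r j ≤
      (∏ j ∈ Icc 2 C, r j) * ∏ j ∈ Icc k C, r j := by
  obtain ⟨h2k, hkC⟩ := mem_Icc.mp hk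
  have htail : ∀ i, 1 ≤ i → 0 ≤ ∏ j ∈ Icc i C, r j := fun i hi =>
    prod_nonneg fun j hj => hr j (mem_Icc.mpr ⟨hi.trans (mem_Icc.mp hj).1, (mem_Icc.mp hj).2⟩)
  rw [prod_Icc_eq_mul_prod_Icc_succ r (by omega : 1 ≤ C), prod_Icc_eq_mul_prod_Icc_succ r hkC]
  have hprod := mul_nonneg (htail 2 (by omega)) (htail (k + 1) (by omega))
  have hrk := hr1 k (mem_Icc.mpr ⟨by omega, hkC⟩)
  nlinarith [mul_le_mul_of_nonneg_right hrk hprod]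

section WeightedSums

variable {C : ℕ} {a z : ℕ → ℝ}

lemma mul_sum_shift_le (hC : 1 ≤ C) (ha : ∀ k ∈ Icc 2 C, 0 ≤ a k)
    (hcross : ∀ k ∈ Icc 2 C, z 1 * z (k + 1) ≤ z 2 * z k) :
    z 1 * ∑ k ∈ Icc 1 C, a k * z (k + 1) ≤
      a 1 * (z 1 * z 2) + z 2 * ∑ k ∈ Icc 2 C, a k * z k := by
  rw [sum_Icc_eq_add_sum_Icc_succ (fun k => a k * z (k + 1)) hC,
    mul_add, mul_sum, mul_sum]
  refine add_le_add (le_of_eq (by ring)) (sum_le_sum fun k hk => ?_)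
  nlinarith [mul_le_mul_of_nonneg_left (hcross k hk) (ha k hk)]

theorem mul_sum_shift_le_sum_mul (hC : 2 ≤ C) (ha : ∀ k ∈ Icc 1 C, 0 ≤ a k)
    (hz : ∀ k ∈ Icc 1 C, 0 ≤ z k) (hcross : ∀ k ∈ Icc 2 C, z 1 * z (k + 1) ≤ z 2 * z k) :
    a 2 * z 1 * ∑ k ∈ Icc 1 C, a k * z (k + 1) ≤
      (∑ k ∈ Icc 2 C, a k * z k) * (a 1 * z 1 + ∑ k ∈ Icc 2 C, a k * z k) := by
  set y := ∑ k ∈ Icc 2 C, a k * z k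
  have hIcc : Icc 2 C ⊆ Icc 1 C := Icc_subset_Icc_left one_le_two
  have h2 : (2 : ℕ) ∈ Icc 1 C := mem_Icc.mpr ⟨one_le_two, hC⟩
  have h1 : (1 : ℕ) ∈ Icc 1 C := mem_Icc.mpr ⟨le_rfl, by omega⟩
  have hy2 : a 2 * z 2 ≤ y :=
    single_le_sum (f := fun k => a k * z k)
      (fun k hk => mul_nonneg (ha k (hIcc hk)) (hz k (hIcc hk))) (mem_Icc.mpr ⟨le_rfl, hC⟩)
  have hy : 0 ≤ y := (mul_nonneg (ha 2 h2) (hz 2 h2)).trans hy2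
  calc a 2 * z 1 * ∑ k ∈ Icc 1 C, a k * z (k + 1)
      = a 2 * (z 1 * ∑ k ∈ Icc 1 C, a k * z (k + 1)) := by ring
    _ ≤ a 2 * (a 1 * (z 1 * z 2) + z 2 * y) :=
        mul_le_mul_of_nonneg_left
          (mul_sum_shift_le (by omega) (fun k hk => ha k (hIcc hk)) hcross) (ha 2 h2)
    _ = a 2 * z 2 * (a 1 * z 1 + y) := by ring
    _ ≤ y * (a 1 * z 1 + y) :=
        mul_le_mul_of_nonneg_right hy2 (add_nonneg (mul_nonneg (ha 1 h1) (hz 1 h1)) hy)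

end WeightedSums

theorem stmt_16 (C : ℕ) (hC : 2 ≤ C) (lam : ℕ → ℝ) (μ : ℝ) (hμ : 0 < μ)
    (hnn : ∀ j, 1 ≤ j → j ≤ C → 0 ≤ lam j)
    (hmono : ∀ i j, 1 ≤ i → i ≤ j → j ≤ C → lam i ≤ lam j)
    (z : ℕ → ℝ) (hz : ∀ i, z i = ∏ j ∈ Finset.Icc i C, (lam j / μ))
    (a : ℕ → ℝ) (ha : ∀ i, a i = (C.descFactorial i : ℝ))
    (x y : ℝ)
    (hx : x = ∑ k ∈ Finset.Icc 1 C, a k * z (k + 1))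
    (hy : y = ∑ k ∈ Finset.Icc 2 C, a k * z k) :
    a 2 * z 1 * x ≤ y * (a 1 * z 1 + y) := by
  have hr : ∀ j ∈ Icc 1 C, 0 ≤ lam j / μ := fun j hj =>
    div_nonneg (hnn j (mem_Icc.mp hj).1 (mem_Icc.mp hj).2) hμ.le
  have hr1 : ∀ j ∈ Icc 1 C, lam 1 / μ ≤ lam j / μ := fun j hj =>
    div_le_div_of_nonneg_right (hmono 1 j le_rfl (mem_Icc.mp hj).1 (mem_Icc.mp hj).2) hμ.le
  subst hx hy
  refine mul_sum_shift_le_sum_mul hC (fun k _ => by rw [ha]; positivity)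
    (fun k hk => ?_) (fun k hk => ?_)
  · rw [hz]
    exact prod_nonneg fun j hj =>
      hr j (mem_Icc.mpr ⟨(mem_Icc.mp hk).1.trans (mem_Icc.mp hj).1, (mem_Icc.mp hj).2⟩)
  · simp only [hz]
    exact prod_Icc_one_mul_prod_Icc_succ_le _ hr hr1 hk
end
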